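/- Let s be a complex number with Re(s) > 0, let p ∈ H, and suppose Û ∈ V solves the frequency-controlled auxiliary problem: s²·⟪ι Û, ι v⟫_H + a(Û, v) = B{q''}(s)·⟪p, ι v⟫_H for all v ∈ V, where B{q''}(s) = ∫_ℝ (deriv (deriv q))(t)·exp(−s·t) dt. Then ‖Û‖_V ≤ (4·√π/(α³·Re(s)·min(1, c)))·exp(−Re(s)·t₀ + (Re(s))²/α²)·|s|⁴·exp(−(Im(s))²/α²)·‖p‖_H. -/

import Mathlib

open MeasureTheory Real

private lemma aux_integrable_pow_mul_cexp (n : ℕ) {b : ℂ} (hb : b.re < 0) (c d : ℂ) :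
    Integrable (fun u : ℝ => (u : ℂ) ^ n * Complex.exp (b * u ^ 2 + c * u + d)) := by
  have h2 : (0:ℝ) < -b.re / 2 := by linarith
  have hbne : b.re ≠ 0 := ne_of_lt hb
  have hbase : Integrable (fun x : ℝ => x ^ n * Real.exp (-(-b.re / 2) * x ^ 2)) := by
    have h := integrable_rpow_mul_exp_neg_mul_sq h2 (s := (n : ℝ))
      (lt_of_lt_of_le (by norm_num) (Nat.cast_nonneg n))
    have : (fun x : ℝ => x ^ (n : ℝ) * Real.exp (-(-b.re / 2) * x ^ 2))
        = fun x : ℝ => x ^ n * Real.exp (-(-b.re / 2) * x ^ 2) := by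
      funext x; rw [Real.rpow_natCast]
    rwa [this] at h
  have hmaj : Integrable (fun x : ℝ =>
      Real.exp (d.re - c.re ^ 2 / (2 * b.re)) * |x ^ n * Real.exp (-(-b.re / 2) * x ^ 2)|) :=
    hbase.abs.const_mul _
  refine hmaj.mono' ?_ ?_
  · apply Continuous.aestronglyMeasurable
    fun_prop
  · filter_upwards with x
    have hre : (b * (x : ℂ) ^ 2 + c * (x : ℂ) + d).re = b.re * x ^ 2 + c.re * x + d.re := by
      simp [Complex.add_re, Complex.mul_re, Complex.ofReal_re, Complex.ofReal_im, pow_two]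
    have hexp : Real.exp (b.re * x ^ 2 + c.re * x + d.re)
        ≤ Real.exp (d.re - c.re ^ 2 / (2 * b.re)) * Real.exp (-(-b.re / 2) * x ^ 2) := by
      rw [← Real.exp_add]
      apply Real.exp_le_exp.2
      have hkey : d.re - c.re ^ 2 / (2 * b.re) + -(-b.re / 2) * x ^ 2
          - (b.re * x ^ 2 + c.re * x + d.re) = (b.re * x + c.re) ^ 2 / (-(2 * b.re)) := by
        field_simp
        ring
      nlinarith [div_nonneg (sq_nonneg (b.re * x + c.re)) (by linarith : (0:ℝ) ≤ -(2 * b.re))]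
    calc ‖(x : ℂ) ^ n * Complex.exp (b * x ^ 2 + c * x + d)‖
        = |x| ^ n * Real.exp (b.re * x ^ 2 + c.re * x + d.re) := by
          rw [norm_mul, norm_pow, Complex.norm_real, Real.norm_eq_abs,
            Complex.norm_exp, hre]
      _ ≤ |x| ^ n * (Real.exp (d.re - c.re ^ 2 / (2 * b.re)) * Real.exp (-(-b.re / 2) * x ^ 2)) :=
          mul_le_mul_of_nonneg_left hexp (by positivity)
      _ = Real.exp (d.re - c.re ^ 2 / (2 * b.re)) * |x ^ n * Real.exp (-(-b.re / 2) * x ^ 2)| := by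
          rw [abs_mul, abs_pow, abs_of_pos (Real.exp_pos _)]
          ring

private lemma aux_integrable_poly_mul_cexp {b : ℂ} (hb : b.re < 0) (c d e0 e1 e2 e3 e4 : ℂ) :
    Integrable (fun u : ℝ =>
      (e4 * u ^ 4 + e3 * u ^ 3 + e2 * u ^ 2 + e1 * u + e0) *
        Complex.exp (b * u ^ 2 + c * u + d)) := by
  have h := ((((((aux_integrable_pow_mul_cexp 4 hb c d).const_mul e4).add
    ((aux_integrable_pow_mul_cexp 3 hb c d).const_mul e3)).add
    ((aux_integrable_pow_mul_cexp 2 hb c d).const_mul e2)).add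
    ((aux_integrable_pow_mul_cexp 1 hb c d).const_mul e1)).add
    ((aux_integrable_pow_mul_cexp 0 hb c d).const_mul e0))
  exact h.congr (ae_of_all _ fun u => by simp only [Pi.add_apply]; push_cast; ring)

private lemma aux_gaussian_poly_integral {b : ℂ} (hb : b.re < 0) (c d a0 a1 a2 a3 : ℂ) :
    (∫ u : ℝ, ((3 * a3 * u ^ 2 + 2 * a2 * u + a1)
        + (a3 * u ^ 3 + a2 * u ^ 2 + a1 * u + a0) * (2 * b * u + c)) *
        Complex.exp (b * u ^ 2 + c * u + d)) = 0 := by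
  apply integral_eq_zero_of_hasDerivAt_of_integrable
    (f := fun u : ℝ => (a3 * (u:ℂ) ^ 3 + a2 * (u:ℂ) ^ 2 + a1 * u + a0) *
      Complex.exp (b * (u:ℂ) ^ 2 + c * u + d))
  · intro x
    have hpoly : HasDerivAt (fun z : ℂ => a3 * z ^ 3 + a2 * z ^ 2 + a1 * z + a0)
        (3 * a3 * (x:ℂ) ^ 2 + 2 * a2 * (x:ℂ) + a1) (x:ℂ) := by
      have h3 : HasDerivAt (fun z : ℂ => z ^ 3) (3 * (x:ℂ) ^ 2) (x:ℂ) := by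
        simpa using hasDerivAt_pow 3 (x:ℂ)
      have h2 : HasDerivAt (fun z : ℂ => z ^ 2) (2 * (x:ℂ)) (x:ℂ) := by
        simpa using hasDerivAt_pow 2 (x:ℂ)
      have h1 : HasDerivAt (fun z : ℂ => z) 1 (x:ℂ) := hasDerivAt_id _
      have := (((h3.const_mul a3).fun_add (h2.const_mul a2)).fun_add (h1.const_mul a1)).add_const a0
      refine this.congr_deriv ?_
      ring
    have hexp : HasDerivAt (fun z : ℂ => Complex.exp (b * z ^ 2 + c * z + d))
        ((2 * b * (x:ℂ) + c) * Complex.exp (b * (x:ℂ) ^ 2 + c * x + d)) (x:ℂ) := by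
      have hq : HasDerivAt (fun z : ℂ => b * z ^ 2 + c * z + d) (2 * b * (x:ℂ) + c) (x:ℂ) := by
        have h2 : HasDerivAt (fun z : ℂ => z ^ 2) (2 * (x:ℂ)) (x:ℂ) := by
          simpa using hasDerivAt_pow 2 (x:ℂ)
        have := ((h2.const_mul b).fun_add ((hasDerivAt_id (x:ℂ)).const_mul c)).add_const d
        refine this.congr_deriv ?_
        ring
      simpa [mul_comm] using hq.cexp
    have hmul := hpoly.fun_mul hexp
    have : HasDerivAt (fun z : ℂ => (a3 * z ^ 3 + a2 * z ^ 2 + a1 * z + a0) *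
        Complex.exp (b * z ^ 2 + c * z + d))
        (((3 * a3 * (x:ℂ) ^ 2 + 2 * a2 * (x:ℂ) + a1)
          + (a3 * (x:ℂ) ^ 3 + a2 * (x:ℂ) ^ 2 + a1 * x + a0) * (2 * b * (x:ℂ) + c)) *
          Complex.exp (b * (x:ℂ) ^ 2 + c * x + d)) (x:ℂ) := by
      refine hmul.congr_deriv ?_
      ring
    exact this.comp_ofReal
  · exact (aux_integrable_poly_mul_cexp hb c d (a1 + c * a0) (2 * a2 + 2 * b * a0 + c * a1)
      (3 * a3 + 2 * b * a1 + c * a2) (2 * b * a2 + c * a3) (2 * b * a3)).congr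
      (ae_of_all _ fun u => by push_cast; ring)
  · exact (aux_integrable_poly_mul_cexp hb c d a0 a1 a2 a3 0).congr
      (ae_of_all _ fun u => by push_cast; ring)

private lemma ricker_deriv2 (α t₀ : ℝ) (t : ℝ) :
    (deriv (deriv (fun u : ℝ =>
        (1 - α ^ 2 / 2 * (u - t₀) ^ 2) * Real.exp (-(α ^ 2 / 4) * (u - t₀) ^ 2))) t : ℂ)
      = (((-(α ^ 6 / 8) * (t - t₀) ^ 4 + 3 * α ^ 4 / 2 * (t - t₀) ^ 2 - 3 * α ^ 2 / 2) *
          Real.exp (-(α ^ 2 / 4) * (t - t₀) ^ 2) : ℝ) : ℂ) := by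
  have hexp : ∀ x : ℝ, HasDerivAt (fun y : ℝ => Real.exp (-(α ^ 2 / 4) * (y - t₀) ^ 2))
      (-(α ^ 2 / 4) * (2 * (x - t₀)) * Real.exp (-(α ^ 2 / 4) * (x - t₀) ^ 2)) x := by
    intro x
    have hu : HasDerivAt (fun y : ℝ => y - t₀) 1 x := (hasDerivAt_id x).sub_const t₀
    have hsq : HasDerivAt (fun y : ℝ => (y - t₀) ^ 2) (2 * (x - t₀)) x := by
      simpa using hu.fun_pow 2
    have := (hsq.const_mul (-(α ^ 2 / 4))).exp
    simpa [mul_comm, mul_assoc, mul_left_comm] using this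
  have hq1 : ∀ x : ℝ, HasDerivAt (fun u : ℝ =>
      (1 - α ^ 2 / 2 * (u - t₀) ^ 2) * Real.exp (-(α ^ 2 / 4) * (u - t₀) ^ 2))
      ((α ^ 4 / 4 * (x - t₀) ^ 3 - 3 * α ^ 2 / 2 * (x - t₀)) *
        Real.exp (-(α ^ 2 / 4) * (x - t₀) ^ 2)) x := by
    intro x
    have hu : HasDerivAt (fun y : ℝ => y - t₀) 1 x := (hasDerivAt_id x).sub_const t₀
    have hsq : HasDerivAt (fun y : ℝ => (y - t₀) ^ 2) (2 * (x - t₀)) x := by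
      simpa using hu.fun_pow 2
    have hpoly : HasDerivAt (fun y : ℝ => 1 - α ^ 2 / 2 * (y - t₀) ^ 2)
        (-(α ^ 2 / 2 * (2 * (x - t₀)))) x := ((hsq.const_mul (α ^ 2 / 2)).const_sub 1)
    have := hpoly.fun_mul (hexp x)
    refine this.congr_deriv ?_
    ring
  have hq2 : ∀ x : ℝ, HasDerivAt (fun y : ℝ =>
      (α ^ 4 / 4 * (y - t₀) ^ 3 - 3 * α ^ 2 / 2 * (y - t₀)) *
        Real.exp (-(α ^ 2 / 4) * (y - t₀) ^ 2))
      ((-(α ^ 6 / 8) * (x - t₀) ^ 4 + 3 * α ^ 4 / 2 * (x - t₀) ^ 2 - 3 * α ^ 2 / 2) *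
        Real.exp (-(α ^ 2 / 4) * (x - t₀) ^ 2)) x := by
    intro x
    have hu : HasDerivAt (fun y : ℝ => y - t₀) 1 x := (hasDerivAt_id x).sub_const t₀
    have h3 : HasDerivAt (fun y : ℝ => (y - t₀) ^ 3) (3 * (x - t₀) ^ 2) x := by
      simpa using hu.fun_pow 3
    have hpoly : HasDerivAt (fun y : ℝ => α ^ 4 / 4 * (y - t₀) ^ 3 - 3 * α ^ 2 / 2 * (y - t₀))
        (α ^ 4 / 4 * (3 * (x - t₀) ^ 2) - 3 * α ^ 2 / 2 * 1) x :=
      (h3.const_mul (α ^ 4 / 4)).sub (hu.const_mul (3 * α ^ 2 / 2))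
    have := hpoly.fun_mul (hexp x)
    refine this.congr_deriv ?_
    ring
  -- the complex-valued function appearing in the statement is the coercion of the real one
  have hcF : (fun u : ℝ => (1 - (α:ℂ) ^ 2 / 2 * ((u:ℂ) - (t₀:ℂ)) ^ 2) *
        ((Real.exp (-(α ^ 2 / 4) * (u - t₀) ^ 2) : ℝ) : ℂ))
      = fun u : ℝ => (((1 - α ^ 2 / 2 * (u - t₀) ^ 2) *
          Real.exp (-(α ^ 2 / 4) * (u - t₀) ^ 2) : ℝ) : ℂ) := by
    funext u
    push_cast
    ring
  show deriv (deriv (fun u : ℝ => (1 - (α:ℂ) ^ 2 / 2 * ((u:ℂ) - (t₀:ℂ)) ^ 2) *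
      ((Real.exp (-(α ^ 2 / 4) * (u - t₀) ^ 2) : ℝ) : ℂ))) t = _
  rw [hcF]
  have hd1 : deriv (fun u : ℝ => (((1 - α ^ 2 / 2 * (u - t₀) ^ 2) *
      Real.exp (-(α ^ 2 / 4) * (u - t₀) ^ 2) : ℝ) : ℂ))
      = fun x : ℝ => (((α ^ 4 / 4 * (x - t₀) ^ 3 - 3 * α ^ 2 / 2 * (x - t₀)) *
        Real.exp (-(α ^ 2 / 4) * (x - t₀) ^ 2) : ℝ) : ℂ) :=
    funext fun x => ((hq1 x).ofReal_comp).deriv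
  rw [hd1]
  exact ((hq2 t).ofReal_comp).deriv

private lemma ricker_laplace (α t₀ : ℝ) (hα : 0 < α) (s : ℂ) :
    (∫ t : ℝ, (deriv (deriv (fun u : ℝ =>
        (1 - α ^ 2 / 2 * (u - t₀) ^ 2) * Real.exp (-(α ^ 2 / 4) * (u - t₀) ^ 2))) t : ℂ) *
        Complex.exp (-s * (t : ℂ)))
      = ((-(4 * Real.sqrt Real.pi / α ^ 3) : ℝ) : ℂ) * s ^ 4 *
          Complex.exp (-s * t₀ + s ^ 2 / (α : ℂ) ^ 2) := by
  have hα' : (α : ℂ) ≠ 0 := Complex.ofReal_ne_zero.2 (ne_of_gt hα)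
  set b : ℂ := ((-(α ^ 2 / 4) : ℝ) : ℂ) with hbdef
  have hb : b.re < 0 := by
    simp only [hbdef, Complex.ofReal_re]
    nlinarith [sq_nonneg α, hα]
  set c : ℂ := -s with hcdef
  set d : ℂ := -s * t₀ with hddef
  -- the coefficients of the antiderivative polynomial
  set a3 : ℂ := (α : ℂ) ^ 4 / 4 with ha3
  set a2 : ℂ := -((α : ℂ) ^ 2 / 2) * s with ha2
  set a1 : ℂ := s ^ 2 - 3 * (α : ℂ) ^ 2 / 2 with ha1
  set a0 : ℂ := s - 2 * s ^ 3 / (α : ℂ) ^ 2 with ha0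
  have step1 : (∫ t : ℝ, (deriv (deriv (fun u : ℝ =>
        (1 - α ^ 2 / 2 * (u - t₀) ^ 2) * Real.exp (-(α ^ 2 / 4) * (u - t₀) ^ 2))) t : ℂ) *
        Complex.exp (-s * (t : ℂ)))
      = ∫ t : ℝ, (((-(α ^ 6 / 8) * (t - t₀) ^ 4 + 3 * α ^ 4 / 2 * (t - t₀) ^ 2 - 3 * α ^ 2 / 2) *
          Real.exp (-(α ^ 2 / 4) * (t - t₀) ^ 2) : ℝ) : ℂ) * Complex.exp (-s * (t : ℂ)) :=
    integral_congr_ae (Filter.Eventually.of_forall fun t => by simp only [ricker_deriv2 α t₀ t])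
  rw [step1]
  rw [← integral_add_right_eq_self (fun t : ℝ =>
    (((-(α ^ 6 / 8) * (t - t₀) ^ 4 + 3 * α ^ 4 / 2 * (t - t₀) ^ 2 - 3 * α ^ 2 / 2) *
      Real.exp (-(α ^ 2 / 4) * (t - t₀) ^ 2) : ℝ) : ℂ) * Complex.exp (-s * (t : ℂ))) t₀]
  have step2 : (∫ u : ℝ, (((-(α ^ 6 / 8) * (u + t₀ - t₀) ^ 4 + 3 * α ^ 4 / 2 * (u + t₀ - t₀) ^ 2
        - 3 * α ^ 2 / 2) * Real.exp (-(α ^ 2 / 4) * (u + t₀ - t₀) ^ 2) : ℝ) : ℂ) *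
        Complex.exp (-s * ((u + t₀ : ℝ) : ℂ)))
      = ∫ u : ℝ, (((3 * a3 * u ^ 2 + 2 * a2 * u + a1)
          + (a3 * u ^ 3 + a2 * u ^ 2 + a1 * u + a0) * (2 * b * u + c)) *
          Complex.exp (b * u ^ 2 + c * u + d)
        - (2 * s ^ 4 / (α : ℂ) ^ 2) * Complex.exp (b * u ^ 2 + c * u + d)) := by
    refine integral_congr_ae (Filter.Eventually.of_forall fun u => ?_)
    have hexp : (Real.exp (-(α ^ 2 / 4) * (u + t₀ - t₀) ^ 2) : ℂ) *
        Complex.exp (-s * ((u + t₀ : ℝ) : ℂ)) = Complex.exp (b * u ^ 2 + c * u + d) := by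
      rw [Complex.ofReal_exp, ← Complex.exp_add]
      congr 1
      push_cast [hbdef, hcdef, hddef]
      ring
    calc (((-(α ^ 6 / 8) * (u + t₀ - t₀) ^ 4 + 3 * α ^ 4 / 2 * (u + t₀ - t₀) ^ 2
          - 3 * α ^ 2 / 2) * Real.exp (-(α ^ 2 / 4) * (u + t₀ - t₀) ^ 2) : ℝ) : ℂ) *
          Complex.exp (-s * ((u + t₀ : ℝ) : ℂ))
        = ((-((α:ℂ) ^ 6 / 8) * u ^ 4 + 3 * (α:ℂ) ^ 4 / 2 * u ^ 2 - 3 * (α:ℂ) ^ 2 / 2)) *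
            ((Real.exp (-(α ^ 2 / 4) * (u + t₀ - t₀) ^ 2) : ℂ) *
              Complex.exp (-s * ((u + t₀ : ℝ) : ℂ))) := by
          push_cast
          ring
      _ = ((-((α:ℂ) ^ 6 / 8) * u ^ 4 + 3 * (α:ℂ) ^ 4 / 2 * u ^ 2 - 3 * (α:ℂ) ^ 2 / 2)) *
            Complex.exp (b * u ^ 2 + c * u + d) := by rw [hexp]
      _ = ((3 * a3 * u ^ 2 + 2 * a2 * u + a1)
            + (a3 * u ^ 3 + a2 * u ^ 2 + a1 * u + a0) * (2 * b * u + c)) *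
            Complex.exp (b * u ^ 2 + c * u + d)
          - (2 * s ^ 4 / (α : ℂ) ^ 2) * Complex.exp (b * u ^ 2 + c * u + d) := by
          rw [show ((3 * a3 * (u:ℂ) ^ 2 + 2 * a2 * u + a1)
              + (a3 * (u:ℂ) ^ 3 + a2 * (u:ℂ) ^ 2 + a1 * u + a0) * (2 * b * u + c)) *
              Complex.exp (b * u ^ 2 + c * u + d)
            - (2 * s ^ 4 / (α : ℂ) ^ 2) * Complex.exp (b * u ^ 2 + c * u + d)
            = ((3 * a3 * (u:ℂ) ^ 2 + 2 * a2 * u + a1)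
              + (a3 * (u:ℂ) ^ 3 + a2 * (u:ℂ) ^ 2 + a1 * u + a0) * (2 * b * u + c)
              - 2 * s ^ 4 / (α : ℂ) ^ 2) * Complex.exp (b * u ^ 2 + c * u + d) from by ring]
          refine congrArg (· * Complex.exp (b * u ^ 2 + c * u + d)) ?_
          rw [ha3, ha2, ha1, ha0, hbdef, hcdef]
          push_cast
          have hinv : (α:ℂ) ^ 2 * ((α:ℂ) ^ 2)⁻¹ = 1 := mul_inv_cancel₀ (pow_ne_zero 2 hα')
          linear_combination (-(s ^ 3 * (u:ℂ))) * hinv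
  rw [step2]
  have hint1 : Integrable (fun u : ℝ => ((3 * a3 * u ^ 2 + 2 * a2 * u + a1)
      + (a3 * u ^ 3 + a2 * u ^ 2 + a1 * u + a0) * (2 * b * u + c)) *
      Complex.exp (b * u ^ 2 + c * u + d)) :=
    (aux_integrable_poly_mul_cexp hb c d (a1 + c * a0) (2 * a2 + 2 * b * a0 + c * a1)
      (3 * a3 + 2 * b * a1 + c * a2) (2 * b * a2 + c * a3) (2 * b * a3)).congr
      (ae_of_all _ fun u => by ring)
  have hint2 : Integrable (fun u : ℝ =>
      (2 * s ^ 4 / (α : ℂ) ^ 2) * Complex.exp (b * u ^ 2 + c * u + d)) :=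
    (integrable_cexp_quadratic' hb c d).const_mul _
  rw [integral_sub hint1 hint2, aux_gaussian_poly_integral hb c d a0 a1 a2 a3,
    integral_const_mul, integral_cexp_quadratic hb c d]
  -- now pure arithmetic with cpow
  have h1 : (↑Real.pi / -b : ℂ) = ((4 * Real.pi / α ^ 2 : ℝ) : ℂ) := by
    rw [hbdef]
    push_cast
    field_simp
  have h2 : ((4 * Real.pi / α ^ 2 : ℝ) : ℂ) ^ (1 / 2 : ℂ) = ((2 * Real.sqrt Real.pi / α : ℝ) : ℂ) := by
    rw [show (1 / 2 : ℂ) = ((1 / 2 : ℝ) : ℂ) by norm_num, ← Complex.ofReal_cpow (by positivity)]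
    congr 1
    rw [← Real.sqrt_eq_rpow]
    rw [show (4 * Real.pi / α ^ 2 : ℝ) = (2 * Real.sqrt Real.pi / α) ^ 2 by
      rw [div_pow, mul_pow, Real.sq_sqrt Real.pi_nonneg]; norm_num]
    exact Real.sqrt_sq (by positivity)
  have h3 : d - c ^ 2 / (4 * b) = -s * t₀ + s ^ 2 / (α : ℂ) ^ 2 := by
    rw [hddef, hcdef, hbdef]
    push_cast
    have : ((α : ℂ) ^ 2) ≠ 0 := pow_ne_zero 2 hα'
    field_simp
    ring
  rw [h1, h2, h3]
  push_cast
  field_simp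
  rw [hddef]
  ring

set_option maxHeartbeats 1000000 in
/-- Bound for the solution of the frequency-controlled auxiliary problem (Lemma on `Uhat⁽²⁾`):
with the Ricker wavelet `q(t) = (1 - (α²/2)(t - t₀)²) exp (-(α²/4)(t - t₀)²)` and `Re s > 0`,
if `Uhat ∈ V` solves `s² ⟪ι Uhat, ι v⟫_H + a(Uhat, v) = B{q''}(s) ⟪p, ι v⟫_H` for all `v`, where
`B{q''}(s) = ∫_ℝ q''(t) e^{-s t} dt`, then
`‖Uhat‖_V ≤ (4√π/(α³ Re s · min 1 c)) e^{-Re s · t₀ + (Re s)²/α²} |s|⁴ e^{-(Im s)²/α²} ‖p‖_H`.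
Here the paper's pairing `⟪x, y⟫_H` (linear in `x`, conjugate-linear in `y`) is written as
Mathlib's `inner y x`. -/
theorem auxiliary_problem_bound
    {V H : Type*} [NormedAddCommGroup V] [InnerProductSpace ℂ V] [CompleteSpace V]
    [NormedAddCommGroup H] [InnerProductSpace ℂ H] [CompleteSpace H]
    (ι : V →L[ℂ] H) (a : V → V → ℂ)
    (ha_add : ∀ u u' v : V, a (u + u') v = a u v + a u' v)
    (ha_smul : ∀ (z : ℂ) (u v : V), a (z • u) v = z * a u v)
    (ha_herm : ∀ u v : V, a u v = starRingEnd ℂ (a v u))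
    (ha_bdd : ∃ C : ℝ, ∀ u v : V, ‖a u v‖ ≤ C * ‖u‖ * ‖v‖)
    (c : ℝ) (hc : 0 < c) (ha_coer : ∀ v : V, c * ‖v‖ ^ 2 ≤ (a v v).re)
    (α t₀ : ℝ) (hα : 0 < α) (ht₀ : 0 < t₀)
    (s : ℂ) (hs : 0 < s.re)
    (p : H) (Uhat : V)
    (hU : ∀ v : V, s ^ 2 * (inner ℂ (ι v) (ι Uhat) : ℂ) + a Uhat v =
      (∫ t : ℝ,
          (deriv (deriv (fun u : ℝ =>
              (1 - α ^ 2 / 2 * (u - t₀) ^ 2) * Real.exp (-(α ^ 2 / 4) * (u - t₀) ^ 2))) t : ℂ) *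
            Complex.exp (-s * (t : ℂ))) * (inner ℂ (ι v) p : ℂ)) :
    ‖Uhat‖ ≤ 4 * Real.sqrt Real.pi / (α ^ 3 * s.re * min 1 c) *
        Real.exp (-s.re * t₀ + s.re ^ 2 / α ^ 2) * ‖s‖ ^ 4 *
        Real.exp (-s.im ^ 2 / α ^ 2) * ‖p‖ := by
  have h0 := hU Uhat
  rw [ricker_laplace α t₀ hα s] at h0
  have hinner : (inner ℂ (ι Uhat) (ι Uhat) : ℂ) = ((‖ι Uhat‖ : ℝ) : ℂ) ^ 2 := by
    exact_mod_cast inner_self_eq_norm_sq_to_K (𝕜 := ℂ) (ι Uhat)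
  rw [hinner] at h0
  set m : ℝ := 4 * Real.sqrt Real.pi / α ^ 3 * ‖s‖ ^ 4 *
    Real.exp (-s.re * t₀ + (s.re ^ 2 - s.im ^ 2) / α ^ 2) with hm
  have hm0 : 0 ≤ m := by positivity
  set N : ℝ := ‖ι Uhat‖ with hN
  set X : ℝ := ‖Uhat‖ with hX
  -- absolute value of the Laplace transform coefficient
  have habs : ‖((-(4 * Real.sqrt Real.pi / α ^ 3) : ℝ) : ℂ) * s ^ 4 *
      Complex.exp (-s * t₀ + s ^ 2 / (α : ℂ) ^ 2)‖ = m := by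
    rw [norm_mul, norm_mul, Complex.norm_real, Real.norm_eq_abs, Complex.norm_exp, norm_pow]
    have h1 : |(-(4 * Real.sqrt Real.pi / α ^ 3) : ℝ)| = 4 * Real.sqrt Real.pi / α ^ 3 := by
      rw [abs_neg, abs_of_nonneg (by positivity)]
    have h2 : (-s * t₀ + s ^ 2 / (α : ℂ) ^ 2).re = -s.re * t₀ + (s.re ^ 2 - s.im ^ 2) / α ^ 2 := by
      have hA : (-s * (t₀ : ℂ)).re = -s.re * t₀ := by simp
      have hB : (s ^ 2 / (α : ℂ) ^ 2).re = (s.re ^ 2 - s.im ^ 2) / α ^ 2 := by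
        rw [show ((α : ℂ) ^ 2) = ((α ^ 2 : ℝ) : ℂ) by push_cast; ring, Complex.div_ofReal_re,
          show (s ^ 2).re = s.re ^ 2 - s.im ^ 2 by rw [pow_two, Complex.mul_re]; ring]
      rw [Complex.add_re, hA, hB]
    rw [h1, h2, hm]
  -- the imaginary part of a(U,U) vanishes
  have haim : (a Uhat Uhat).im = 0 := by
    have h := congrArg Complex.im (ha_herm Uhat Uhat)
    simp only [Complex.conj_im] at h
    linarith
  -- real-part energy identity and estimate
  have hkey : s.re * ‖s‖ ^ 2 * N ^ 2 + s.re * (a Uhat Uhat).re ≤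
      ‖s‖ * (m * (N * ‖p‖)) := by
    have h1 : ((starRingEnd ℂ) s * (s ^ 2 * ((N : ℝ) : ℂ) ^ 2 + a Uhat Uhat)).re
        = ((starRingEnd ℂ) s * (((-(4 * Real.sqrt Real.pi / α ^ 3) : ℝ) : ℂ) * s ^ 4 *
          Complex.exp (-s * t₀ + s ^ 2 / (α : ℂ) ^ 2) * (inner ℂ (ι Uhat) p : ℂ))).re := by
      rw [h0]
    have hl : ((starRingEnd ℂ) s * (s ^ 2 * ((N : ℝ) : ℂ) ^ 2 + a Uhat Uhat)).re
        = s.re * ‖s‖ ^ 2 * N ^ 2 + (s.re * (a Uhat Uhat).re + s.im * (a Uhat Uhat).im) := by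
      have e1 : (starRingEnd ℂ) s * (s ^ 2 * ((N : ℝ) : ℂ) ^ 2 + a Uhat Uhat)
          = ((‖s‖ ^ 2 * N ^ 2 : ℝ) : ℂ) * s + (starRingEnd ℂ) s * a Uhat Uhat := by
        have habs2 : ((‖s‖ : ℝ) : ℂ) ^ 2 = s * (starRingEnd ℂ) s := by
          rw [← Complex.ofReal_pow, Complex.sq_norm, Complex.mul_conj]
        push_cast
        rw [habs2]
        ring
      rw [e1, Complex.add_re]
      simp only [Complex.mul_re, Complex.ofReal_re, Complex.ofReal_im, Complex.conj_re,
        Complex.conj_im, Complex.ofReal_pow]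
      ring
    rw [hl, haim] at h1
    have hr : ((starRingEnd ℂ) s * (((-(4 * Real.sqrt Real.pi / α ^ 3) : ℝ) : ℂ) * s ^ 4 *
        Complex.exp (-s * t₀ + s ^ 2 / (α : ℂ) ^ 2) * (inner ℂ (ι Uhat) p : ℂ))).re
        ≤ ‖s‖ * (m * (N * ‖p‖)) := by
      refine le_trans (Complex.re_le_norm _) ?_
      rw [norm_mul, norm_mul, Complex.norm_conj, habs]
      have hip : ‖(inner ℂ (ι Uhat) p : ℂ)‖ ≤ N * ‖p‖ := by
        exact norm_inner_le_norm _ _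
      exact mul_le_mul_of_nonneg_left (mul_le_mul_of_nonneg_left hip hm0) (norm_nonneg s)
    calc s.re * ‖s‖ ^ 2 * N ^ 2 + s.re * (a Uhat Uhat).re
        = s.re * ‖s‖ ^ 2 * N ^ 2 + (s.re * (a Uhat Uhat).re + s.im * 0) := by ring
      _ ≤ ‖s‖ * (m * (N * ‖p‖)) := h1 ▸ hr
  have hcoer' : c * X ^ 2 ≤ (a Uhat Uhat).re := ha_coer Uhat
  have h2 : s.re * ‖s‖ ^ 2 * N ^ 2 + s.re * (c * X ^ 2) ≤
      ‖s‖ * (m * (N * ‖p‖)) := by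
    nlinarith [mul_le_mul_of_nonneg_left hcoer' hs.le]
  have hmain : 4 * s.re ^ 2 * (c * X ^ 2) ≤ m ^ 2 * ‖p‖ ^ 2 := by
    nlinarith [mul_le_mul_of_nonneg_left h2 (by positivity : (0:ℝ) ≤ 4 * s.re),
      sq_nonneg (2 * s.re * (‖s‖ * N) - m * ‖p‖)]
  set μ : ℝ := min 1 c with hμ
  have hμpos : 0 < μ := lt_min one_pos hc
  have hμ1 : μ ≤ 1 := min_le_left _ _
  have hμc : μ ≤ c := min_le_right _ _
  have hfin2 : (s.re * μ * X) ^ 2 ≤ (m * ‖p‖) ^ 2 := by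
    nlinarith [sq_nonneg X, sq_nonneg s.re, mul_pos hs hs,
      mul_nonneg (mul_nonneg (sq_nonneg s.re) (sq_nonneg X)) hμpos.le]
  have hfin : s.re * μ * X ≤ m * ‖p‖ := by
    nlinarith [mul_nonneg (mul_nonneg hs.le hμpos.le) (norm_nonneg Uhat),
      mul_nonneg hm0 (norm_nonneg p)]
  have hexp : Real.exp (-s.re * t₀ + s.re ^ 2 / α ^ 2) * Real.exp (-s.im ^ 2 / α ^ 2)
      = Real.exp (-s.re * t₀ + (s.re ^ 2 - s.im ^ 2) / α ^ 2) := by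
    rw [← Real.exp_add]
    congr 1
    field_simp
    ring
  have htarget : 4 * Real.sqrt Real.pi / (α ^ 3 * s.re * μ) *
      Real.exp (-s.re * t₀ + s.re ^ 2 / α ^ 2) * ‖s‖ ^ 4 *
      Real.exp (-s.im ^ 2 / α ^ 2) * ‖p‖ = m * ‖p‖ / (s.re * μ) := by
    rw [hm, ← hexp]
    field_simp
  rw [htarget, le_div_iff₀ (mul_pos hs hμpos)]
  nlinarith [hfin]
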